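/- arXiv:math/0312491 — 2 statements merged into one kernel-verified Lean document; each statement's English description precedes it below -/
import Mathlib

section
/- Every finitely generated residually finite group is hopfian. -/
theorem malcev_fg_residually_finite_hopfian {G : Type*} [Group G]
    (hfg : Group.FG G)
    (hrf : ∀ g : G, g ≠ 1 → ∃ (H : Type) (_ : Group H) (_ : Finite H)
      (φ : G →* H), φ g ≠ 1) :
    ∀ ψ : G →* G, Function.Surjective ψ → Function.Injective ψ := by
  intro ψ hsurj
  rw [← MonoidHom.ker_eq_bot_iff, eq_bot_iff]
  intro g hg
  by_contra hg1
  obtain ⟨H, _, _, φ, hφ⟩ := hrf g hg1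
  obtain ⟨S, hS⟩ := hfg
  -- Hom(G, H) is finite
  have hfin : Finite (G →* H) := by
    have : Function.Injective (fun (f : G →* H) => (fun s : S => f s)) := by
      intro f f' hff'
      refine MonoidHom.eq_of_eqOn_dense (s := (S : Set G)) (by simpa using hS) ?_
      intro x hx
      exact congrFun hff' ⟨x, hx⟩
    exact Finite.of_injective _ this
  -- precomposition with ψ is injective, hence surjective
  have hinj : Function.Injective (fun (f : G →* H) => f.comp ψ) := by
    intro f f' h
    ext x
    obtain ⟨y, rfl⟩ := hsurj x
    exact DFunLike.congr_fun h y
  have hsurj2 : Function.Surjective (fun (f : G →* H) => f.comp ψ) :=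
    Finite.surjective_of_injective hinj
  obtain ⟨f, hf⟩ := hsurj2 φ
  apply hφ
  have : φ g = f (ψ g) := by rw [← hf]; rfl
  rw [this, hg, map_one]
end

section
/- Let G be a group, x, y ∈ G, d ≥ 1, and suppose (x^d y^d)^d x^d = 1 in G and G is torsion-free with unique commutation of powers (i.e., [a^k, b^k] = 1 implies [a,b] = 1 for k ≠ 0). Then [x, y] = 1. -/
/-!
The relation says `(x^d y^d)^d = x^{-d}`, so `(x^d y^d)^d` commutes with `x^d`. Extracting `d`-th
roots of commuting powers, `x^d y^d` commutes with `x`; cancelling `x^d` leaves `y^d` commuting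
with `x`, hence with `x^d`, and one more root extraction gives `[x, y] = 1`.
-/

open scoped commutatorElement

section RootsOfCommutingPowers

variable {G : Type*} [Group G]

theorem commute_of_commute_pow
    (hcomm : ∀ (a b : G) (k : ℤ), k ≠ 0 → ⁅a ^ k, b ^ k⁆ = 1 → ⁅a, b⁆ = 1)
    {a b : G} {n : ℕ} (hn : n ≠ 0)
    (h : Commute (a ^ n) (b ^ n)) : Commute a b := by
  refine commutatorElement_eq_one_iff_commute.mp (hcomm a b n (by exact_mod_cast hn) ?_)
  rw [zpow_natCast, zpow_natCast]
  exact commutatorElement_eq_one_iff_commute.mpr h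

theorem commute_of_pow_mul_pow_pow_mul_pow_eq_one
    (hcomm : ∀ (a b : G) (k : ℤ), k ≠ 0 → ⁅a ^ k, b ^ k⁆ = 1 → ⁅a, b⁆ = 1)
    {x y : G} {d : ℕ} (hd : d ≠ 0)
    (hrel : (x ^ d * y ^ d) ^ d * x ^ d = 1) : Commute x y := by
  have hpow : Commute ((x ^ d * y ^ d) ^ d) (x ^ d) := by
    rw [eq_inv_of_mul_eq_one_left hrel]
    exact (Commute.refl _).inv_left
  have hword : Commute (x ^ d * y ^ d) x :=
    commute_of_commute_pow hcomm hd hpow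
  have hyx : Commute (y ^ d) x := by
    simpa only [inv_mul_cancel_left] using
      ((Commute.refl x).pow_left d).inv_left.mul_left hword
  exact (commute_of_commute_pow hcomm hd (hyx.pow_right d)).symm

end RootsOfCommutingPowers

theorem commutes_of_vword_trivial_general {G : Type*} [Group G]
    (hcomm : ∀ (a b : G) (k : ℤ), k ≠ 0 → ⁅a ^ k, b ^ k⁆ = 1 → ⁅a, b⁆ = 1)
    (x y : G) (d : ℕ) (hd : 1 ≤ d)
    (hrel : (x ^ d * y ^ d) ^ d * x ^ d = 1) :
    ⁅x, y⁆ = 1 :=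
  commutatorElement_eq_one_iff_commute.mpr
    (commute_of_pow_mul_pow_pow_mul_pow_eq_one hcomm (Nat.one_le_iff_ne_zero.mp hd) hrel)

theorem commutes_of_vword_trivial {G : Type*} [Group G]
    (htf : ∀ (g : G) (n : ℤ), n ≠ 0 → g ^ n = 1 → g = 1)
    (hcomm : ∀ (a b : G) (k : ℤ), k ≠ 0 → ⁅a ^ k, b ^ k⁆ = 1 → ⁅a, b⁆ = 1)
    (x y : G) (d : ℕ) (hd : 1 ≤ d)
    (hrel : (x ^ d * y ^ d) ^ d * x ^ d = 1) :
    ⁅x, y⁆ = 1 :=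
  commutes_of_vword_trivial_general hcomm x y d hd hrel
end
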